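/- arXiv:1107.6019 — 3 statements merged into one kernel-verified Lean document; each statement's English description precedes it below -/
import Mathlib

section
/- In a symmetric monoidal category with terminal tensor unit I, given a state η : I → A ⊗ B and an effect ε : B ⊗ C → I, the composite (1_A ⊗ ε) ∘ (η ⊗ 1_C) : C → A (postselected teleportation) is disconnected: it equals ψ ∘ ⊤_C for some state ψ : I → A. Concretely, it equals ((1_A ⊗ ⊤_B)∘η) ∘ ⊤_C. -/
/-!
Since the unit is terminal, the effect `ε : B ⊗ X ⟶ 𝟙_` is forced to be the product effect
`⊤_B ⊗ ⊤_X`. For a product effect the teleportation composite splits, by coherence and the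
interchange law, into the effect `⊤_X` followed by the state obtained from `η` by discarding `B`.
-/

open CategoryTheory MonoidalCategory

section

variable {M : Type*} [Category M] [MonoidalCategory M]

lemma leftUnitor_inv_whiskerRight_whiskerLeft_rightUnitor_hom {A X : M}
    (ψ : 𝟙_ M ⟶ A) (e : X ⟶ 𝟙_ M) :
    (λ_ X).inv ≫ ψ ▷ X ≫ A ◁ e ≫ (ρ_ A).hom = e ≫ ψ := by
  rw [← whisker_exchange_assoc, rightUnitor_naturality, ← unitors_equal,
    ← leftUnitor_inv_naturality_assoc, Iso.inv_hom_id_assoc]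

lemma whiskerRight_associator_whiskerLeft_whiskerRight_leftUnitor {A B : M} (X : M)
    (η : 𝟙_ M ⟶ A ⊗ B) (φ : B ⟶ 𝟙_ M) :
    η ▷ X ≫ (α_ A B X).hom ≫ A ◁ (φ ▷ X ≫ (λ_ X).hom)
      = (η ≫ A ◁ φ ≫ (ρ_ A).hom) ▷ X := by
  monoidal

lemma teleportation_eq_of_product_effect {A B X : M} (η : 𝟙_ M ⟶ A ⊗ B)
    (φ : B ⟶ 𝟙_ M) (e : X ⟶ 𝟙_ M) :
    (λ_ X).inv ≫ η ▷ X ≫ (α_ A B X).hom ≫ A ◁ ((φ ▷ X ≫ (λ_ X).hom) ≫ e) ≫ (ρ_ A).hom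
      = e ≫ η ≫ A ◁ φ ≫ (ρ_ A).hom := by
  calc _ = (λ_ X).inv ≫ (η ▷ X ≫ (α_ A B X).hom ≫ A ◁ (φ ▷ X ≫ (λ_ X).hom)) ≫ A ◁ e ≫
          (ρ_ A).hom := by simp only [whiskerLeft_comp, Category.assoc]
    _ = _ := by
      rw [whiskerRight_associator_whiskerLeft_whiskerRight_leftUnitor,
        leftUnitor_inv_whiskerRight_whiskerLeft_rightUnitor_hom]

end

theorem stmt5_general {M : Type*} [Category M] [MonoidalCategory M]
    (top : ∀ A : M, A ⟶ 𝟙_ M) (huniq : ∀ (A : M) (f : A ⟶ 𝟙_ M), f = top A)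
    {A B X : M} (η : 𝟙_ M ⟶ A ⊗ B) (ε : B ⊗ X ⟶ 𝟙_ M) :
    (λ_ X).inv ≫ (η ▷ X) ≫ (α_ A B X).hom ≫ (A ◁ ε) ≫ (ρ_ A).hom
      = top X ≫ (η ≫ (A ◁ top B) ≫ (ρ_ A).hom) := by
  have hε : ε = (top B ▷ X ≫ (λ_ X).hom) ≫ top X := (huniq _ _).trans (huniq _ _).symm
  rw [hε]
  exact teleportation_eq_of_product_effect η (top B) (top X)

/-- With terminal tensor unit, postselected teleportation is disconnected. -/
theorem stmt5 {M : Type*} [Category M] [MonoidalCategory M] [SymmetricCategory M]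
    (top : ∀ A : M, A ⟶ 𝟙_ M) (huniq : ∀ (A : M) (f : A ⟶ 𝟙_ M), f = top A)
    {A B X : M} (η : 𝟙_ M ⟶ A ⊗ B) (ε : B ⊗ X ⟶ 𝟙_ M) :
    (λ_ X).inv ≫ (η ▷ X) ≫ (α_ A B X).hom ≫ (A ◁ ε) ≫ (ρ_ A).hom
      = top X ≫ (η ≫ (A ◁ top B) ≫ (ρ_ A).hom) :=
  stmt5_general top huniq η ε
end

section
/- In a compact closed category whose tensor unit is terminal, every identity morphism is disconnected: for every object A, 1_A = ψ ∘ ⊤_A for some state ψ : I → A (whenever A has at least one state). Consequently every morphism of the category is disconnected. -/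
/-!
If the unit is terminal, the counit `ε : A ⊗ A* ⟶ I` is forced to be the disconnected effect
`⊤_A ⊗ ⊤_{A*}`. Substituting it into the snake identity
`1_A = (ε ⊗ 1_A) ∘ (1_A ⊗ η)` cuts the wire through `A`: the identity becomes `⊤_A` followed by
the state `(⊤_{A*} ⊗ 1_A) ∘ η`. Any `f : A ⟶ B` then equals `1_B ∘ f`, and `⊤_B ∘ f = ⊤_A`.
-/

open CategoryTheory MonoidalCategory Limits

section Monoidal

variable {C : Type*} [Category C] [MonoidalCategory C]

theorem id_eq_comp_of_counit_eq_tensorHom {A D : C} (ε : A ⊗ D ⟶ 𝟙_ C) (η : 𝟙_ C ⟶ D ⊗ A)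
    (snake : (ρ_ A).inv ≫ (A ◁ η) ≫ (α_ A D A).inv ≫ (ε ▷ A) ≫ (λ_ A).hom = 𝟙 A)
    (t : A ⟶ 𝟙_ C) (e : D ⟶ 𝟙_ C) (hε : ε = (t ⊗ₘ e) ≫ (λ_ (𝟙_ C)).hom) :
    𝟙 A = t ≫ η ≫ (e ▷ A) ≫ (λ_ A).hom := by
  rw [← snake, hε, MonoidalCategory.tensorHom_def]
  simp only [comp_whiskerRight, Category.assoc]
  slice_lhs 3 4 => rw [← associator_inv_naturality_left]
  slice_lhs 2 3 => rw [whisker_exchange]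
  slice_lhs 1 2 => rw [← rightUnitor_inv_naturality]
  simp [← unitors_inv_equal]

theorem id_eq_from_comp_of_isTerminal_unit (hI : IsTerminal (𝟙_ C)) {A D : C}
    (ε : A ⊗ D ⟶ 𝟙_ C) (η : 𝟙_ C ⟶ D ⊗ A)
    (snake : (ρ_ A).inv ≫ (A ◁ η) ≫ (α_ A D A).inv ≫ (ε ▷ A) ≫ (λ_ A).hom = 𝟙 A) :
    𝟙 A = hI.from A ≫ η ≫ (hI.from D ▷ A) ≫ (λ_ A).hom :=
  id_eq_comp_of_counit_eq_tensorHom ε η snake _ _ (hI.hom_ext _ _)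

end Monoidal

theorem CategoryTheory.Limits.IsTerminal.eq_from_comp_of_id_eq {C : Type*} [Category C]
    {T B : C} (hT : IsTerminal T) {ψ : T ⟶ B} (hψ : 𝟙 B = hT.from B ≫ ψ) {A : C} (f : A ⟶ B) : f = hT.from A ≫ ψ := by
  rw [← Category.comp_id f, hψ, ← Category.assoc, hT.hom_ext (f ≫ hT.from B) (hT.from A)]

theorem stmt6_general {M : Type*} [Category M] [MonoidalCategory M]
    (top : ∀ A : M, A ⟶ 𝟙_ M) (huniq : ∀ (A : M) (f : A ⟶ 𝟙_ M), f = top A)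
    (d : M → M) (ε : ∀ A : M, A ⊗ d A ⟶ 𝟙_ M) (η : ∀ A : M, 𝟙_ M ⟶ d A ⊗ A)
    (snake1 : ∀ A : M,
      (ρ_ A).inv ≫ (A ◁ η A) ≫ (α_ A (d A) A).inv ≫ (ε A ▷ A) ≫ (λ_ A).hom = 𝟙 A) :
    (∀ A : M, ∃ ψ : 𝟙_ M ⟶ A, 𝟙 A = top A ≫ ψ) ∧
    (∀ (A B : M) (f : A ⟶ B), ∃ p : 𝟙_ M ⟶ B, f = top A ≫ p) := by
  let hI : IsTerminal (𝟙_ M) := IsTerminal.ofUniqueHom top huniq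
  have hid (A : M) : 𝟙 A = top A ≫ η A ≫ (top (d A) ▷ A) ≫ (λ_ A).hom :=
    id_eq_from_comp_of_isTerminal_unit hI (ε A) (η A) (snake1 A)
  exact ⟨fun A => ⟨_, hid A⟩, fun _ B f => ⟨_, hI.eq_from_comp_of_id_eq (hid B) f⟩⟩

/-- In a compact closed category with terminal tensor unit (and at least one state per object),
every identity is disconnected, and consequently every morphism is disconnected. -/
theorem stmt6 {M : Type*} [Category M] [MonoidalCategory M] [SymmetricCategory M]
    (top : ∀ A : M, A ⟶ 𝟙_ M) (huniq : ∀ (A : M) (f : A ⟶ 𝟙_ M), f = top A)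
    (d : M → M) (ε : ∀ A : M, A ⊗ d A ⟶ 𝟙_ M) (η : ∀ A : M, 𝟙_ M ⟶ d A ⊗ A)
    (snake1 : ∀ A : M,
      (ρ_ A).inv ≫ (A ◁ η A) ≫ (α_ A (d A) A).inv ≫ (ε A ▷ A) ≫ (λ_ A).hom = 𝟙 A)
    (snake2 : ∀ A : M,
      (λ_ (d A)).inv ≫ (η A ▷ d A) ≫ (α_ (d A) A (d A)).hom ≫ (d A ◁ ε A) ≫
        (ρ_ (d A)).hom = 𝟙 (d A))
    (hstate : ∀ A : M, Nonempty (𝟙_ M ⟶ A)) :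
    (∀ A : M, ∃ ψ : 𝟙_ M ⟶ A, 𝟙 A = top A ≫ ψ) ∧
    (∀ (A B : M) (f : A ⟶ B), ∃ p : 𝟙_ M ⟶ B, f = top A ≫ p) :=
  stmt6_general top huniq d ε η snake1
end

section
/- In a causal category, if A causally precedes B or A and B are causally unrelated (i.e., in either case the hom-set C(B,A) is disconnected), then any isomorphism f : A ≅ B forces A ≅ I and B ≅ I. -/
open CategoryTheory MonoidalCategory

/-!
If `f⁻¹ : B ⟶ A` factors as `B ⟶ I ⟶ A` through the terminal unit, then so does
`1_A = f ≫ f⁻¹`; a state `ψ : I ⟶ A` with `⊤_A ≫ ψ = 1_A` is inverse to `⊤_A`, because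
`ψ ≫ ⊤_A = 1_I` by terminality. Hence `A ≅ I`, and `B ≅ A ≅ I`.
-/

namespace CategoryTheory.Limits.IsTerminal

variable {C : Type*} [Category C] {T : C} (hT : IsTerminal T)

def isoOfFromComp {A : C} (ψ : T ⟶ A) (h : hT.from A ≫ ψ = 𝟙 A) : A ≅ T where
  hom := hT.from A
  inv := ψ
  hom_inv_id := h
  inv_hom_id := hT.hom_ext _ _

theorem from_comp_eq_id_of_inv_eq {A B : C} (f : A ≅ B) (ψ : T ⟶ A)
    (h : f.inv = hT.from B ≫ ψ) : hT.from A ≫ ψ = 𝟙 A := by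
  rw [← f.hom_inv_id, h, ← Category.assoc, hT.hom_ext (f.hom ≫ hT.from B) (hT.from A)]

end CategoryTheory.Limits.IsTerminal

theorem stmt10_general {M : Type*} [Category M] [MonoidalCategory M]
    (top : ∀ A : M, A ⟶ 𝟙_ M) (huniq : ∀ (A : M) (f : A ⟶ 𝟙_ M), f = top A)
    {A B : M} (hdisc : ∀ g : B ⟶ A, ∃ ψ : 𝟙_ M ⟶ A, g = top B ≫ ψ)
    (f : A ≅ B) :
    Nonempty (A ≅ 𝟙_ M) ∧ Nonempty (B ≅ 𝟙_ M) := by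
  let hI : Limits.IsTerminal (𝟙_ M) := Limits.IsTerminal.ofUniqueHom top huniq
  obtain ⟨ψ, hψ⟩ := hdisc f.inv
  let iA : A ≅ 𝟙_ M := hI.isoOfFromComp ψ (hI.from_comp_eq_id_of_inv_eq f ψ hψ)
  exact ⟨⟨iA⟩, ⟨f.symm ≪≫ iA⟩⟩

/-- In a causal category, if `C(B,A)` is disconnected (i.e. `A` causally precedes `B` or they
are causally unrelated), then any isomorphism `A ≅ B` forces `A ≅ I` and `B ≅ I`. -/
theorem stmt10 {M : Type*} [Category M] [MonoidalCategory M] [SymmetricCategory M]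
    (top : ∀ A : M, A ⟶ 𝟙_ M) (huniq : ∀ (A : M) (f : A ⟶ 𝟙_ M), f = top A)
    (hstate : ∀ A : M, Nonempty (𝟙_ M ⟶ A))
    {A B : M} (hdisc : ∀ g : B ⟶ A, ∃ ψ : 𝟙_ M ⟶ A, g = top B ≫ ψ)
    (f : A ≅ B) :
    Nonempty (A ≅ 𝟙_ M) ∧ Nonempty (B ≅ 𝟙_ M) :=
  stmt10_general top huniq hdisc f
end
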